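/- Let E be a finite set, Γ a finite nonempty collection of subsets of E, and E = E₁ ⊔ E₂ a partition into two nonempty sets that divides Γ. If ν₁ is a pmf on Γ₁ attaining MEO(Γ₁) and ν₂ is a pmf on Γ₂ attaining MEO(Γ₂), then the product coupling ν on Γ defined by ν(γ) = ν₁(γ ∩ E₁) · ν₂(γ ∩ E₂) is a pmf on Γ that attains MEO(Γ). -/

import Mathlib

noncomputable section
open Finset

/-- A probability mass function on a finite family `Γ` of subsets of `E`:
nonnegative, supported on `Γ`, summing to one. -/
def IsPmf {E : Type*} [DecidableEq E] (Γ : Finset (Finset E)) (μ : Finset E → ℝ) : Prop :=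
  (∀ γ, 0 ≤ μ γ) ∧ (∀ γ, γ ∉ Γ → μ γ = 0) ∧ ∑ γ ∈ Γ, μ γ = 1

/-- Expected overlap of two iid samples from `μ`. -/
def EO {E : Type*} [DecidableEq E] (Γ : Finset (Finset E)) (μ : Finset E → ℝ) : ℝ :=
  ∑ γ ∈ Γ, ∑ γ' ∈ Γ, ((γ ∩ γ').card : ℝ) * μ γ * μ γ'

/-- Minimum expected overlap over all pmfs on `Γ`. -/
def MEO {E : Type*} [DecidableEq E] (Γ : Finset (Finset E)) : ℝ :=
  sInf {x : ℝ | ∃ μ, IsPmf Γ μ ∧ x = EO Γ μ}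

/-!
Along a partition `E = E₁ ⊔ E₂` the overlap of two sets splits as
`|γ ∩ γ'| = |γ ∩ γ' ∩ E₁| + |γ ∩ γ' ∩ E₂|`, so the expected overlap of any pmf on `Γ` is the sum of
the expected overlaps of its two marginals on `Γ₁` and `Γ₂`; hence `MEO Γ₁ + MEO Γ₂ ≤ MEO Γ`.
When the partition divides `Γ`, the map `(γ₁, γ₂) ↦ γ₁ ∪ γ₂` is a bijection `Γ₁ × Γ₂ ≃ Γ`, so the
product coupling is a pmf on `Γ` whose marginals are `ν₁` and `ν₂`, and its expected overlap
`MEO Γ₁ + MEO Γ₂` attains the lower bound.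
-/

section ExpectedOverlap

variable {E : Type*} [DecidableEq E]

theorem EO_nonneg {Γ : Finset (Finset E)} {μ : Finset E → ℝ} (hμ : ∀ γ, 0 ≤ μ γ) :
    0 ≤ EO Γ μ :=
  sum_nonneg fun _ _ => sum_nonneg fun _ _ =>
    mul_nonneg (mul_nonneg (Nat.cast_nonneg _) (hμ _)) (hμ _)

theorem bddBelow_EO (Γ : Finset (Finset E)) : BddBelow {x : ℝ | ∃ μ, IsPmf Γ μ ∧ x = EO Γ μ} :=
  ⟨0, fun _ ⟨_, hμ, hx⟩ => hx ▸ EO_nonneg hμ.1⟩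

theorem MEO_le_EO {Γ : Finset (Finset E)} {μ : Finset E → ℝ} (hμ : IsPmf Γ μ) :
    MEO Γ ≤ EO Γ μ :=
  csInf_le (bddBelow_EO Γ) ⟨μ, hμ, rfl⟩

theorem EO_eq_MEO_of_forall_EO_le {Γ : Finset (Finset E)} {ν : Finset E → ℝ} (hν : IsPmf Γ ν)
    (h : ∀ μ, IsPmf Γ μ → EO Γ ν ≤ EO Γ μ) : EO Γ ν = MEO Γ :=
  le_antisymm (le_csInf ⟨_, ν, hν, rfl⟩ fun _ ⟨μ, hμ, hx⟩ => hx ▸ h μ hμ) (MEO_le_EO hν)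

theorem EO_congr {Γ : Finset (Finset E)} {μ μ' : Finset E → ℝ} (h : ∀ γ ∈ Γ, μ γ = μ' γ) :
    EO Γ μ = EO Γ μ' :=
  sum_congr rfl fun γ hγ => sum_congr rfl fun γ' hγ' => by rw [h γ hγ, h γ' hγ']

end ExpectedOverlap

section Pushforward

variable {E F : Type*} [DecidableEq F]

def pushforward (Γ : Finset (Finset E)) (f : Finset E → Finset F) (μ : Finset E → ℝ)
    (a : Finset F) : ℝ :=
  ∑ γ ∈ Γ with f γ = a, μ γ

theorem IsPmf.pushforward [DecidableEq E] {Γ : Finset (Finset E)} {μ : Finset E → ℝ}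
    (hμ : IsPmf Γ μ) (f : Finset E → Finset F) : IsPmf (Γ.image f) (pushforward Γ f μ) := by
  refine ⟨fun _ => sum_nonneg fun γ _ => hμ.1 γ, fun a ha => sum_eq_zero fun γ hγ => ?_,
    (sum_fiberwise_of_maps_to (fun γ hγ => mem_image_of_mem f hγ) μ).trans hμ.2.2⟩
  rw [mem_filter] at hγ
  exact absurd (hγ.2 ▸ mem_image_of_mem f hγ.1) ha

theorem sum_image_pushforward_mul (Γ : Finset (Finset E)) (f : Finset E → Finset F)
    (μ : Finset E → ℝ) (φ : Finset F → ℝ) :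
    ∑ a ∈ Γ.image f, pushforward Γ f μ a * φ a = ∑ γ ∈ Γ, μ γ * φ (f γ) := by
  rw [← sum_fiberwise_of_maps_to fun γ hγ => mem_image_of_mem f hγ]
  refine sum_congr rfl fun a _ => ?_
  rw [pushforward, sum_mul]
  exact sum_congr rfl fun γ hγ => by rw [(mem_filter.1 hγ).2]

theorem EO_image_pushforward (Γ : Finset (Finset E)) (f : Finset E → Finset F)
    (μ : Finset E → ℝ) :
    EO (Γ.image f) (pushforward Γ f μ) =
      ∑ γ ∈ Γ, ∑ γ' ∈ Γ, ((f γ ∩ f γ').card : ℝ) * μ γ * μ γ' := by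
  calc EO (Γ.image f) (pushforward Γ f μ)
      = ∑ a ∈ Γ.image f, pushforward Γ f μ a *
          ∑ a' ∈ Γ.image f, pushforward Γ f μ a' * ((a ∩ a').card : ℝ) := by
        simp only [EO, mul_sum]
        exact sum_congr rfl fun _ _ => sum_congr rfl fun _ _ => by ring
    _ = ∑ a ∈ Γ.image f, pushforward Γ f μ a * ∑ γ' ∈ Γ, μ γ' * ((a ∩ f γ').card : ℝ) := by
        simp only [sum_image_pushforward_mul]
    _ = ∑ γ ∈ Γ, μ γ * ∑ γ' ∈ Γ, μ γ' * ((f γ ∩ f γ').card : ℝ) :=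
        sum_image_pushforward_mul Γ f μ _
    _ = _ := by
        simp only [mul_sum]
        exact sum_congr rfl fun _ _ => sum_congr rfl fun _ _ => by ring

end Pushforward

section Partition

variable {E : Type*} [Fintype E] [DecidableEq E] {E₁ E₂ : Finset E}

theorem inter_union_inter_eq_self (hcover : E₁ ∪ E₂ = univ) (γ : Finset E) :
    γ ∩ E₁ ∪ γ ∩ E₂ = γ := by
  rw [← inter_union_distrib_left, hcover, inter_univ]

theorem card_eq_card_inter_add_card_inter (hdisj : Disjoint E₁ E₂)
    (hcover : E₁ ∪ E₂ = univ) (s : Finset E) : s.card = (s ∩ E₁).card + (s ∩ E₂).card := by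
  rw [← card_union_of_disjoint (hdisj.mono inter_subset_right inter_subset_right),
    inter_union_inter_eq_self hcover]

theorem EO_eq_EO_add_EO (hdisj : Disjoint E₁ E₂) (hcover : E₁ ∪ E₂ = univ)
    (Γ : Finset (Finset E)) (μ : Finset E → ℝ) :
    EO Γ μ = EO (Γ.image (· ∩ E₁)) (pushforward Γ (· ∩ E₁) μ) +
      EO (Γ.image (· ∩ E₂)) (pushforward Γ (· ∩ E₂) μ) := by
  rw [EO_image_pushforward, EO_image_pushforward, EO, ← sum_add_distrib]
  refine sum_congr rfl fun γ _ => ?_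
  rw [← sum_add_distrib]
  refine sum_congr rfl fun γ' _ => ?_
  rw [card_eq_card_inter_add_card_inter hdisj hcover (γ ∩ γ'), ← inter_inter_distrib_right,
    ← inter_inter_distrib_right]
  push_cast
  ring

theorem MEO_add_MEO_le_EO (hdisj : Disjoint E₁ E₂) (hcover : E₁ ∪ E₂ = univ)
    {Γ : Finset (Finset E)} {μ : Finset E → ℝ} (hμ : IsPmf Γ μ) :
    MEO (Γ.image (· ∩ E₁)) + MEO (Γ.image (· ∩ E₂)) ≤ EO Γ μ := by
  rw [EO_eq_EO_add_EO hdisj hcover]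
  exact add_le_add (MEO_le_EO (hμ.pushforward _)) (MEO_le_EO (hμ.pushforward _))

end Partition

section Divides

variable {E : Type*} [DecidableEq E] {Γ : Finset (Finset E)} {E₁ E₂ : Finset E}

def Divides (Γ : Finset (Finset E)) (E₁ E₂ : Finset E) : Prop :=
  Γ = image₂ (· ∪ ·) (Γ.image (· ∩ E₁)) (Γ.image (· ∩ E₂))

theorem Divides.symm (hdiv : Divides Γ E₁ E₂) : Divides Γ E₂ E₁ := by
  unfold Divides at hdiv ⊢
  rw [image₂_swap]
  convert hdiv using 2
  simp only [union_comm]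

theorem subset_of_mem_image_inter {P a : Finset E} (ha : a ∈ Γ.image (· ∩ P)) : a ⊆ P := by
  obtain ⟨γ, _, rfl⟩ := mem_image.1 ha
  exact inter_subset_right

theorem union_inter_eq_of_subset (hdisj : Disjoint E₁ E₂) {a b : Finset E} (ha : a ⊆ E₁)
    (hb : b ⊆ E₂) : (a ∪ b) ∩ E₁ = a ∧ (a ∪ b) ∩ E₂ = b :=
  ⟨by rw [union_inter_distrib_right, inter_eq_left.2 ha,
      disjoint_iff_inter_eq_empty.1 (hdisj.symm.mono_left hb), union_empty],
    by rw [union_inter_distrib_right, inter_eq_left.2 hb,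
      disjoint_iff_inter_eq_empty.1 (hdisj.mono_left ha), empty_union]⟩

theorem union_inter_eq_of_mem_image (hdisj : Disjoint E₁ E₂) {a b : Finset E}
    (ha : a ∈ Γ.image (· ∩ E₁)) (hb : b ∈ Γ.image (· ∩ E₂)) :
    (a ∪ b) ∩ E₁ = a ∧ (a ∪ b) ∩ E₂ = b :=
  union_inter_eq_of_subset hdisj (subset_of_mem_image_inter ha) (subset_of_mem_image_inter hb)

theorem Divides.sum_eq_sum_sum (hdiv : Divides Γ E₁ E₂) (hdisj : Disjoint E₁ E₂)
    (g : Finset E → ℝ) :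
    ∑ γ ∈ Γ, g γ = ∑ a ∈ Γ.image (· ∩ E₁), ∑ b ∈ Γ.image (· ∩ E₂), g (a ∪ b) := by
  have hinj : Set.InjOn (Function.uncurry (· ∪ ·))
      ((Γ.image (· ∩ E₁) ×ˢ Γ.image (· ∩ E₂) : Finset (Finset E × Finset E)) :
        Set (Finset E × Finset E)) := by
    rintro ⟨a, b⟩ hab ⟨a', b'⟩ hab' h
    simp only [coe_product, Set.mem_prod, mem_coe] at hab hab'
    obtain ⟨ha, hb⟩ := union_inter_eq_of_mem_image hdisj hab.1 hab.2
    obtain ⟨ha', hb'⟩ := union_inter_eq_of_mem_image hdisj hab'.1 hab'.2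
    have h : a ∪ b = a' ∪ b' := h
    rw [h] at ha hb
    exact Prod.ext (ha.symm.trans ha') (hb.symm.trans hb')
  conv_lhs => rw [show Γ = _ from hdiv, ← image_uncurry_product, sum_image hinj]
  exact sum_product _ _ _

def productCoupling (E₁ E₂ : Finset E) (ν₁ ν₂ : Finset E → ℝ) (γ : Finset E) : ℝ :=
  ν₁ (γ ∩ E₁) * ν₂ (γ ∩ E₂)

variable {ν₁ ν₂ : Finset E → ℝ}

theorem productCoupling_comm : productCoupling E₁ E₂ ν₁ ν₂ = productCoupling E₂ E₁ ν₂ ν₁ :=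
  funext fun _ => mul_comm _ _

theorem productCoupling_union (hdisj : Disjoint E₁ E₂) {a b : Finset E}
    (ha : a ∈ Γ.image (· ∩ E₁)) (hb : b ∈ Γ.image (· ∩ E₂)) :
    productCoupling E₁ E₂ ν₁ ν₂ (a ∪ b) = ν₁ a * ν₂ b := by
  obtain ⟨ha', hb'⟩ := union_inter_eq_of_mem_image hdisj ha hb
  rw [productCoupling, ha', hb']

theorem IsPmf.productCoupling [Fintype E] (hν₁ : IsPmf (Γ.image (· ∩ E₁)) ν₁)
    (hν₂ : IsPmf (Γ.image (· ∩ E₂)) ν₂) (hdisj : Disjoint E₁ E₂) (hcover : E₁ ∪ E₂ = univ)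
    (hdiv : Divides Γ E₁ E₂) : IsPmf Γ (productCoupling E₁ E₂ ν₁ ν₂) := by
  refine ⟨fun γ => mul_nonneg (hν₁.1 _) (hν₂.1 _), fun γ hγ => ?_, ?_⟩
  · by_cases h₁ : γ ∩ E₁ ∈ Γ.image (· ∩ E₁)
    · by_cases h₂ : γ ∩ E₂ ∈ Γ.image (· ∩ E₂)
      · refine absurd ?_ hγ
        rw [← inter_union_inter_eq_self hcover γ, show Γ = _ from hdiv]
        exact mem_image₂_of_mem h₁ h₂
      · rw [_root_.productCoupling, hν₂.2.1 _ h₂, mul_zero]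
    · rw [_root_.productCoupling, hν₁.2.1 _ h₁, zero_mul]
  · calc ∑ γ ∈ Γ, _root_.productCoupling E₁ E₂ ν₁ ν₂ γ
        = (∑ a ∈ Γ.image (· ∩ E₁), ν₁ a) * ∑ b ∈ Γ.image (· ∩ E₂), ν₂ b := by
          rw [hdiv.sum_eq_sum_sum hdisj, sum_mul_sum]
          exact sum_congr rfl fun a ha => sum_congr rfl fun b hb =>
            productCoupling_union hdisj ha hb
      _ = 1 := by rw [hν₁.2.2, hν₂.2.2, one_mul]

theorem pushforward_productCoupling_left (hdisj : Disjoint E₁ E₂) (hdiv : Divides Γ E₁ E₂)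
    (hν₂ : ∑ b ∈ Γ.image (· ∩ E₂), ν₂ b = 1) {a : Finset E} (ha : a ∈ Γ.image (· ∩ E₁)) :
    pushforward Γ (· ∩ E₁) (productCoupling E₁ E₂ ν₁ ν₂) a = ν₁ a := by
  rw [pushforward, sum_filter, hdiv.sum_eq_sum_sum hdisj]
  calc _ = ∑ a' ∈ Γ.image (· ∩ E₁), ∑ b ∈ Γ.image (· ∩ E₂),
        if a' = a then ν₁ a' * ν₂ b else 0 :=
      sum_congr rfl fun a' ha' => sum_congr rfl fun b hb => by
        rw [(union_inter_eq_of_mem_image hdisj ha' hb).1, productCoupling_union hdisj ha' hb]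
    _ = ν₁ a := by
      rw [sum_comm]
      simp only [sum_ite_eq', if_pos ha, ← mul_sum, hν₂, mul_one]

theorem pushforward_productCoupling_right (hdisj : Disjoint E₁ E₂) (hdiv : Divides Γ E₁ E₂)
    (hν₁ : ∑ a ∈ Γ.image (· ∩ E₁), ν₁ a = 1) {b : Finset E} (hb : b ∈ Γ.image (· ∩ E₂)) :
    pushforward Γ (· ∩ E₂) (productCoupling E₁ E₂ ν₁ ν₂) b = ν₂ b := by
  rw [productCoupling_comm]
  exact pushforward_productCoupling_left hdisj.symm hdiv.symm hν₁ hb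

theorem EO_productCoupling [Fintype E] (hdisj : Disjoint E₁ E₂) (hcover : E₁ ∪ E₂ = univ)
    (hdiv : Divides Γ E₁ E₂) (hν₁ : ∑ a ∈ Γ.image (· ∩ E₁), ν₁ a = 1)
    (hν₂ : ∑ b ∈ Γ.image (· ∩ E₂), ν₂ b = 1) :
    EO Γ (productCoupling E₁ E₂ ν₁ ν₂) =
      EO (Γ.image (· ∩ E₁)) ν₁ + EO (Γ.image (· ∩ E₂)) ν₂ := by
  rw [EO_eq_EO_add_EO hdisj hcover,
    EO_congr fun a => pushforward_productCoupling_left hdisj hdiv hν₂,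
    EO_congr fun b => pushforward_productCoupling_right hdisj hdiv hν₁]

end Divides

theorem product_coupling_optimal_general {E : Type*} [Fintype E] [DecidableEq E]
    (Γ : Finset (Finset E))
    (E₁ E₂ : Finset E)
    (hdisj : Disjoint E₁ E₂) (hcover : E₁ ∪ E₂ = Finset.univ)
    (hdiv : Γ = Finset.image₂ (· ∪ ·) (Γ.image (· ∩ E₁)) (Γ.image (· ∩ E₂)))
    (ν₁ ν₂ : Finset E → ℝ)
    (hν₁ : IsPmf (Γ.image (· ∩ E₁)) ν₁) (hopt₁ : EO (Γ.image (· ∩ E₁)) ν₁ = MEO (Γ.image (· ∩ E₁)))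
    (hν₂ : IsPmf (Γ.image (· ∩ E₂)) ν₂) (hopt₂ : EO (Γ.image (· ∩ E₂)) ν₂ = MEO (Γ.image (· ∩ E₂))) :
    IsPmf Γ (fun γ => ν₁ (γ ∩ E₁) * ν₂ (γ ∩ E₂)) ∧
      EO Γ (fun γ => ν₁ (γ ∩ E₁) * ν₂ (γ ∩ E₂)) = MEO Γ := by
  have hν := hν₁.productCoupling hν₂ hdisj hcover hdiv
  refine ⟨hν, EO_eq_MEO_of_forall_EO_le hν fun μ hμ => ?_⟩
  calc EO Γ (productCoupling E₁ E₂ ν₁ ν₂)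
      = EO (Γ.image (· ∩ E₁)) ν₁ + EO (Γ.image (· ∩ E₂)) ν₂ :=
        EO_productCoupling hdisj hcover hdiv hν₁.2.2 hν₂.2.2
    _ = MEO (Γ.image (· ∩ E₁)) + MEO (Γ.image (· ∩ E₂)) := by rw [hopt₁, hopt₂]
    _ ≤ EO Γ μ := MEO_add_MEO_le_EO hdisj hcover hμ

/-- the product coupling of optimal pmfs on `Γ₁` and `Γ₂` is an
optimal pmf on `Γ`, when the partition divides `Γ`. -/
theorem product_coupling_optimal {E : Type*} [Fintype E] [DecidableEq E]
    (Γ : Finset (Finset E)) (hΓ : Γ.Nonempty)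
    (E₁ E₂ : Finset E) (hE₁ : E₁.Nonempty) (hE₂ : E₂.Nonempty)
    (hdisj : Disjoint E₁ E₂) (hcover : E₁ ∪ E₂ = Finset.univ)
    (hdiv : Γ = Finset.image₂ (· ∪ ·) (Γ.image (· ∩ E₁)) (Γ.image (· ∩ E₂)))
    (ν₁ ν₂ : Finset E → ℝ)
    (hν₁ : IsPmf (Γ.image (· ∩ E₁)) ν₁) (hopt₁ : EO (Γ.image (· ∩ E₁)) ν₁ = MEO (Γ.image (· ∩ E₁)))
    (hν₂ : IsPmf (Γ.image (· ∩ E₂)) ν₂) (hopt₂ : EO (Γ.image (· ∩ E₂)) ν₂ = MEO (Γ.image (· ∩ E₂))) :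
    IsPmf Γ (fun γ => ν₁ (γ ∩ E₁) * ν₂ (γ ∩ E₂)) ∧
      EO Γ (fun γ => ν₁ (γ ∩ E₁) * ν₂ (γ ∩ E₂)) = MEO Γ :=
  product_coupling_optimal_general Γ E₁ E₂ hdisj hcover hdiv ν₁ ν₂ hν₁ hopt₁ hν₂ hopt₂
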